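/- Let P = conv(u_0, u_1, u_2, u_3, u_4) ⊆ ℝ^4 be a full-dimensional lattice simplex with lattice length l(P) ≥ 3 such that no edge of P has lattice length 5. Suppose l_{01}, l_{02} ∈ {4, 8}, l_{03} = 11, and l_{04} ∈ {7, 11, 14, 17}. Let t = (0, 0, 0, 1) and t′ = (0, 0, 1, 0). Then P = (⋃_{i=0}^4 P_{i,3}) ∪ P_{0,4} ∪ P_{0,3,t} ∪ P_{0,3,t′}. -/

import Mathlib

open Finset Pointwise

noncomputable section

/-- The real point corresponding to a lattice point. -/
def toR {n : ℕ} (v : Fin n → ℤ) : Fin n → ℝ := fun x => (v x : ℝ)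

/-- The lattice simplex (as a subset of `ℝ^n`) with the given lattice vertices. -/
def lsimplex {n m : ℕ} (u : Fin m → Fin n → ℤ) : Set (Fin n → ℝ) :=
  convexHull ℝ (Set.range fun i => toR (u i))

/-- The lattice length `l_{ij}` of the edge `u_i u_j`:
the gcd of the coordinates of `u_j - u_i`. -/
def latLen {n m : ℕ} (u : Fin m → Fin n → ℤ) (i j : Fin m) : ℕ :=
  Finset.univ.gcd fun x => (u j x - u i x).natAbs

/-- `r_{ij,k}`: the least nonnegative residue of `l_{ij}` modulo `k`. -/
def rmod {n m : ℕ} (u : Fin m → Fin n → ℤ) (i j : Fin m) (k : ℕ) : ℕ :=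
  latLen u i j % k

/-- The vertices of the `k`-dilation `P_{i,k}`: the vertex `u_i` together with, for `j ≠ i`,
the points `((l_{ij} - r_{ij,k})/l_{ij})·u_j + (r_{ij,k}/l_{ij})·u_i`. -/
def dilVert {n m : ℕ} (u : Fin m → Fin n → ℤ) (i : Fin m) (k : ℕ) (j : Fin m) :
    Fin n → ℝ :=
  if j = i then toR (u i)
  else
    ((((latLen u i j : ℝ) - (rmod u i j k : ℝ)) / (latLen u i j : ℝ)) • toR (u j))
      + (((rmod u i j k : ℝ) / (latLen u i j : ℝ)) • toR (u i))

/-- The `k`-dilation `P_{i,k}`. -/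
def dil {n m : ℕ} (u : Fin m → Fin n → ℤ) (i : Fin m) (k : ℕ) : Set (Fin n → ℝ) :=
  convexHull ℝ (Set.range (dilVert u i k))

/-- The primitive edge vector `ũ_{ij} = (u_j - u_i)/l_{ij}`. -/
def primVec {n m : ℕ} (u : Fin m → Fin n → ℤ) (i j : Fin m) : Fin n → ℝ :=
  (latLen u i j : ℝ)⁻¹ • (toR (u j) - toR (u i))

/-- The translated `k`-dilation `P_{i,k,t} = P_{i,k} + Σ_{j ≠ i} t_j ũ_{ij}`. -/
def dilT {n m : ℕ} (u : Fin m → Fin n → ℤ) (i : Fin m) (k : ℕ) (t : Fin m → ℕ) :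
    Set (Fin n → ℝ) :=
  (fun y => y + ∑ j ∈ Finset.univ.erase i, (t j : ℝ) • primVec u i j) '' dil u i k

/-!
Write a point of `P` as `∑ λ_j u_j` with barycentric weights `λ`. It lies in `P_{i,k}` as soon as
`∑_{j ≠ i} λ_j l_{ij} / (l_{ij} - r_{ij,k}) ≤ 1`, and in `P_{i,k}` translated by `ũ_{ij₀}` when the
same holds after moving weight `1 / l_{ij₀}` from `u_{j₀}` to `u_i`. For `k = 3` the ratio
`l / (l - r)` is at most `4/3` on every edge (as `l ≥ 3` and `l ≠ 5`) and at most `11/9` on edges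
of odd length. Since `l_{ij}` is even exactly when `u_i ≡ u_j (mod 2)`, it is odd whenever `l_{0i}`
and `l_{0j}` have different parities. With the prescribed lengths at `u_0`, these bounds make one
of the eight resulting linear conditions on `λ` hold on the whole simplex of weights, which linear
arithmetic confirms for each value of `l_{04}`.
-/

theorem mem_convexHull_range_iff {ι E : Type*} [Fintype ι] [AddCommGroup E] [Module ℝ E]
    {v : ι → E} {x : E} :
    x ∈ convexHull ℝ (Set.range v) ↔
      ∃ w : ι → ℝ, (∀ i, 0 ≤ w i) ∧ ∑ i, w i = 1 ∧ ∑ i, w i • v i = x := by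
  classical
  refine ⟨fun hx => ?_, fun ⟨w, hw0, hw1, hx⟩ => hx ▸ (convex_convexHull ℝ _).sum_mem
    (fun i _ => hw0 i) hw1 (fun i _ => subset_convexHull ℝ _ (Set.mem_range_self i))⟩
  obtain ⟨s, w, hw0, hw1, rfl⟩ := (convexHull_range_eq_exists_affineCombination v).subset hx
  refine ⟨fun i => if i ∈ s then w i else 0, fun i => ?_, ?_, ?_⟩
  · dsimp only
    split_ifs with h
    exacts [hw0 i h, le_rfl]
  · rwa [Finset.sum_ite_mem, Finset.univ_inter]
  · simp_rw [s.affineCombination_eq_linear_combination v w hw1, ite_smul, zero_smul,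
      Finset.sum_ite_mem, Finset.univ_inter]

theorem Convex.add_sum_smul_sub_mem {ι E : Type*} [Fintype ι] [AddCommGroup E] [Module ℝ E]
    {s : Set E} (hs : Convex ℝ s) {a : E} (ha : a ∈ s) {p : ι → E} (hp : ∀ i, p i ∈ s)
    {μ : ι → ℝ} (hμ0 : ∀ i, 0 ≤ μ i) (hμ1 : ∑ i, μ i ≤ 1) :
    a + ∑ i, μ i • (p i - a) ∈ s := by
  have key := hs.sum_mem (t := Finset.univ) (w := fun o : Option ι => o.elim (1 - ∑ i, μ i) μ)
    (z := fun o => o.elim a p) (fun o _ => by cases o <;> simp [hμ0, hμ1])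
    (by simp [Fintype.sum_option]) (fun o _ => by cases o <;> simp [ha, hp])
  convert key using 1
  simp only [Fintype.sum_option, Option.elim, smul_sub, Finset.sum_sub_distrib, ← Finset.sum_smul,
    sub_smul, one_smul]
  abel

theorem sum_smul_eq_add_sum_smul_sub {ι E : Type*} [Fintype ι] [AddCommGroup E] [Module ℝ E]
    {w : ι → ℝ} (hw : ∑ i, w i = 1) (v : ι → E) (a : E) :
    ∑ i, w i • v i = a + ∑ i, w i • (v i - a) := by
  simp [smul_sub, Finset.sum_sub_distrib, ← Finset.sum_smul, hw]

/-- The reciprocal of the fraction `(l - r) / l` of an edge of lattice length `l` kept by the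
`k`-dilation. For `l = 0` it is `0 / 0 = 0`, so a sum over all vertices `j` of terms
`dilRatio (latLen u i j) k * _` is really a sum over `j ≠ i`. -/
def dilRatio (l k : ℕ) : ℝ := l / (l - (l % k : ℕ))

theorem dilRatio_nonneg (l k : ℕ) : 0 ≤ dilRatio l k :=
  div_nonneg l.cast_nonneg (sub_nonneg.2 (Nat.cast_le.2 (Nat.mod_le l k)))

theorem inv_dilRatio_mem_Icc (l k : ℕ) : (dilRatio l k)⁻¹ ∈ Set.Icc (0 : ℝ) 1 := by
  have hr : ((l % k : ℕ) : ℝ) ≤ l := Nat.cast_le.2 (Nat.mod_le l k)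
  rw [dilRatio, inv_div]
  exact ⟨div_nonneg (sub_nonneg.2 hr) l.cast_nonneg,
    div_le_one_of_le₀ (sub_le_self _ (Nat.cast_nonneg _)) l.cast_nonneg⟩

section Dilation

variable {n m : ℕ} {u : Fin m → Fin n → ℤ} {i j : Fin m} {k : ℕ}

theorem latLen_self (u : Fin m → Fin n → ℤ) (i : Fin m) : latLen u i i = 0 := by
  simp [latLen, Finset.gcd_eq_zero_iff]

theorem rmod_lt_latLen (hk : 0 < k) (h : k ≤ latLen u i j) : rmod u i j k < latLen u i j :=
  (Nat.mod_lt _ hk).trans_le h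

theorem dilVert_eq (hl : j ≠ i → latLen u i j ≠ 0) :
    dilVert u i k j = toR (u i) + (dilRatio (latLen u i j) k)⁻¹ • (toR (u j) - toR (u i)) := by
  by_cases hj : j = i
  · simp [dilVert, hj]
  have hl' : (latLen u i j : ℝ) ≠ 0 := Nat.cast_ne_zero.2 (hl hj)
  have hcoef : (rmod u i j k : ℝ) / latLen u i j =
      1 - (latLen u i j - rmod u i j k) / latLen u i j := by
    field_simp
    ring
  rw [dilVert, if_neg hj, hcoef, dilRatio, inv_div, ← rmod]
  module

theorem dilRatio_smul_dilVert_sub (hr : j ≠ i → rmod u i j k < latLen u i j) :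
    dilRatio (latLen u i j) k • (dilVert u i k j - toR (u i)) = toR (u j) - toR (u i) := by
  by_cases hj : j = i
  · simp [dilVert, hj]
  have hr := hr hj
  have hrat : dilRatio (latLen u i j) k ≠ 0 := by
    have : (rmod u i j k : ℝ) < latLen u i j := Nat.cast_lt.2 hr
    rw [dilRatio, ← rmod]
    exact div_ne_zero (Nat.cast_ne_zero.2 (by omega)) (by linarith)
  rw [dilVert_eq fun _ => by omega, add_sub_cancel_left, smul_smul, mul_inv_cancel₀ hrat,
    one_smul]

theorem toR_mem_lsimplex (u : Fin m → Fin n → ℤ) (i : Fin m) : toR (u i) ∈ lsimplex u :=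
  subset_convexHull ℝ _ (Set.mem_range_self i)

theorem sum_smul_mem_dil (hr : ∀ j ≠ i, rmod u i j k < latLen u i j) {w : Fin m → ℝ}
    (hw0 : ∀ j, 0 ≤ w j) (hw1 : ∑ j, w j = 1) {b : Fin m → ℝ}
    (hb : ∀ j, dilRatio (latLen u i j) k ≤ b j) (h : ∑ j, b j * w j ≤ 1) :
    ∑ j, w j • toR (u j) ∈ dil u i k := by
  have hterm : ∀ j, w j • (toR (u j) - toR (u i)) =
      (dilRatio (latLen u i j) k * w j) • (dilVert u i k j - toR (u i)) := fun j => by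
    rw [mul_comm, mul_smul, dilRatio_smul_dilVert_sub (hr j)]
  rw [sum_smul_eq_add_sum_smul_sub hw1 _ (toR (u i))]
  simp_rw [hterm]
  refine (convex_convexHull ℝ _).add_sum_smul_sub_mem ?_
    (fun j => subset_convexHull ℝ _ (Set.mem_range_self j))
    (fun j => mul_nonneg (dilRatio_nonneg _ _) (hw0 j))
    ((Finset.sum_le_sum fun j _ => mul_le_mul_of_nonneg_right (hb j) (hw0 j)).trans h)
  exact subset_convexHull ℝ _ ⟨i, by simp [dilVert]⟩

theorem dil_subset_lsimplex (hl : ∀ j ≠ i, latLen u i j ≠ 0) : dil u i k ⊆ lsimplex u :=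
  convexHull_min (Set.range_subset_iff.2 fun j => by
      rw [dilVert_eq (hl j)]
      exact (convex_convexHull ℝ _).add_smul_sub_mem (toR_mem_lsimplex u i)
        (toR_mem_lsimplex u j) (inv_dilRatio_mem_Icc _ _))
    (convex_convexHull ℝ _)

end Dilation

section Translation

variable {n m : ℕ} {u : Fin m → Fin n → ℤ} {i j₀ : Fin m} {k : ℕ}

theorem sum_ite_smul_primVec (hj₀ : j₀ ≠ i) :
    ∑ j ∈ Finset.univ.erase i, ((if j = j₀ then 1 else 0 : ℕ) : ℝ) • primVec u i j =
      primVec u i j₀ := by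
  simp [hj₀]

theorem dilT_single_subset_lsimplex (hj₀ : j₀ ≠ i) (hl : ∀ j ≠ i, latLen u i j ≠ 0)
    (hL : ∀ j ≠ i, latLen u i j ≤ latLen u i j₀ * rmod u i j k) :
    dilT u i k (fun j => if j = j₀ then 1 else 0) ⊆ lsimplex u := by
  rintro _ ⟨y, hy, rfl⟩
  rw [sum_ite_smul_primVec hj₀]
  refine convexHull_min (t := (· + primVec u i j₀) ⁻¹' lsimplex u)
    (Set.range_subset_iff.2 fun j => ?_) ((convex_convexHull ℝ _).translate_preimage_left _) hy
  have hL₀ : (1 : ℝ) ≤ latLen u i j₀ := Nat.one_le_cast.2 (Nat.one_le_iff_ne_zero.2 (hl j₀ hj₀))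
  have hsum : (dilRatio (latLen u i j) k)⁻¹ + (latLen u i j₀ : ℝ)⁻¹ ≤ 1 := by
    by_cases hj : j = i
    · simp [hj, latLen_self, dilRatio, inv_le_one_of_one_le₀ hL₀]
    have hlj : (0 : ℝ) < latLen u i j := Nat.cast_pos.2 (Nat.pos_of_ne_zero (hl j hj))
    have hLr : (latLen u i j : ℝ) ≤ latLen u i j₀ * rmod u i j k := by exact_mod_cast hL j hj
    have : (latLen u i j₀ : ℝ)⁻¹ ≤ rmod u i j k / latLen u i j := by
      rw [inv_eq_one_div, div_le_div_iff₀ (by linarith) hlj]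
      linarith
    rw [dilRatio, inv_div, ← rmod, sub_div, div_self hlj.ne']
    linarith
  have key := (convex_convexHull ℝ (Set.range fun i => toR (u i))).add_sum_smul_sub_mem
    (toR_mem_lsimplex u i) (p := ![toR (u j), toR (u j₀)])
    (fun a => by fin_cases a <;> exact toR_mem_lsimplex u _)
    (μ := ![(dilRatio (latLen u i j) k)⁻¹, (latLen u i j₀ : ℝ)⁻¹])
    (fun a => by fin_cases a <;> simp [(inv_dilRatio_mem_Icc _ _).1])
    (by simpa using hsum)
  rw [Set.mem_preimage, dilVert_eq (hl j), primVec]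
  simp only [Fin.sum_univ_two, Matrix.cons_val_zero, Matrix.cons_val_one] at key
  rwa [add_assoc]

theorem sum_smul_mem_dilT_single (hj₀ : j₀ ≠ i) (hr : ∀ j ≠ i, rmod u i j k < latLen u i j)
    {w : Fin m → ℝ} (hw0 : ∀ j, 0 ≤ w j) (hw1 : ∑ j, w j = 1)
    (hwj₀ : (latLen u i j₀ : ℝ)⁻¹ ≤ w j₀) {b : Fin m → ℝ}
    (hb : ∀ j, dilRatio (latLen u i j) k ≤ b j)
    (h : ∑ j, b j * w j ≤ 1 + (b j₀ - b i) / latLen u i j₀) :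
    ∑ j, w j • toR (u j) ∈ dilT u i k (fun j => if j = j₀ then 1 else 0) := by
  set ε : ℝ := (latLen u i j₀ : ℝ)⁻¹
  set w' : Fin m → ℝ := fun j => w j - ε * (if j = j₀ then 1 else 0) + ε * (if j = i then 1 else 0)
  have hε : 0 ≤ ε := inv_nonneg.2 (Nat.cast_nonneg _)
  have hw'0 : ∀ j, 0 ≤ w' j := fun j => by
    rcases eq_or_ne j j₀ with rfl | h₀
    · simpa [w', hj₀] using hwj₀
    · simp only [w', if_neg h₀]
      split_ifs <;> linarith [hw0 j]
  refine ⟨∑ j, w' j • toR (u j), sum_smul_mem_dil hr hw'0 ?_ hb ?_, ?_⟩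
  · simp [w', Finset.sum_add_distrib, hw1]
  · simp only [w', mul_add, mul_sub, Finset.sum_add_distrib, Finset.sum_sub_distrib]
    simp [div_eq_mul_inv, ε] at h ⊢
    linarith
  · show ∑ j, w' j • toR (u j) + _ = _
    rw [sum_ite_smul_primVec hj₀]
    simp [w', add_smul, sub_smul, Finset.sum_add_distrib, Finset.sum_sub_distrib, primVec, ε]
    module

end Translation

section Parity

variable {n m : ℕ} {u : Fin m → Fin n → ℤ}

theorem two_dvd_latLen_iff {i j : Fin m} : 2 ∣ latLen u i j ↔ ∀ x, (2 : ℤ) ∣ u j x - u i x := by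
  simp [latLen, Finset.dvd_gcd_iff, ← Int.ofNat_dvd_left]

theorem latLen_mod_two_eq_of_two_dvd (a : Fin m) {i j : Fin m} (h : 2 ∣ latLen u i j) :
    latLen u a i % 2 = latLen u a j % 2 := by
  have key : 2 ∣ latLen u a i ↔ 2 ∣ latLen u a j := by
    simp only [two_dvd_latLen_iff] at h ⊢
    refine forall_congr' fun x => ?_
    rw [show u j x - u a x = u j x - u i x + (u i x - u a x) by ring, dvd_add_right (h x)]
  omega

end Parity

theorem dilRatio_three_le {l : ℕ} (h3 : 3 ≤ l) (h5 : l ≠ 5) : dilRatio l 3 ≤ 4 / 3 := by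
  have hr : ((l % 3 : ℕ) : ℝ) < l := Nat.cast_lt.2 (by omega)
  have h : ((4 * (l % 3) : ℕ) : ℝ) ≤ l := Nat.cast_le.2 (by omega)
  push_cast at h
  rw [dilRatio, div_le_iff₀ (by linarith)]
  linarith

theorem dilRatio_three_le_of_odd {l : ℕ} (h3 : 3 ≤ l) (h5 : l ≠ 5) (hl : ¬ 2 ∣ l) :
    dilRatio l 3 ≤ 11 / 9 := by
  rw [Nat.two_dvd_ne_zero] at hl
  have hr : ((l % 3 : ℕ) : ℝ) < l := Nat.cast_lt.2 (by omega)
  have h : ((11 * (l % 3) : ℕ) : ℝ) ≤ ((2 * l : ℕ) : ℝ) := Nat.cast_le.2 (by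
    have := Nat.mod_lt l three_pos
    interval_cases hr3 : l % 3 <;> omega)
  push_cast at h
  rw [dilRatio, div_le_iff₀ (by linarith)]
  linarith

/-- Upper bound for `dilRatio (latLen u i j) 3` in terms of the lengths `l = latLen u a` of the
edges at a base vertex `a`: if `l i` and `l j` have different parities, then `l_{ij}` is odd. -/
def ratioBound {m : ℕ} (l : Fin m → ℕ) (i j : Fin m) : ℝ :=
  if i = j then 0 else if l i % 2 = l j % 2 then 4 / 3 else 11 / 9

theorem dilRatio_le_ratioBound {n m : ℕ} {u : Fin m → Fin n → ℤ}
    (hlen : ∀ i j, i ≠ j → 3 ≤ latLen u i j) (h5 : ∀ i j, i ≠ j → latLen u i j ≠ 5)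
    (a i j : Fin m) : dilRatio (latLen u i j) 3 ≤ ratioBound (latLen u a) i j := by
  unfold ratioBound
  split_ifs with hij hpar
  · simp [hij, latLen_self, dilRatio]
  · exact dilRatio_three_le (hlen i j hij) (h5 i j hij)
  · exact dilRatio_three_le_of_odd (hlen i j hij) (h5 i j hij)
      fun h => hpar (latLen_mod_two_eq_of_two_dvd a h)

theorem caseC_weights_cover {l : Fin 5 → ℕ} (h0 : l 0 = 0) (h1 : l 1 = 4 ∨ l 1 = 8)
    (h2 : l 2 = 4 ∨ l 2 = 8) (h3 : l 3 = 11)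
    (h4 : l 4 = 7 ∨ l 4 = 11 ∨ l 4 = 14 ∨ l 4 = 17)
    {w : Fin 5 → ℝ} (hw0 : ∀ j, 0 ≤ w j) (hw1 : ∑ j, w j = 1) :
    (∃ i, ∑ j, ratioBound l i j * w j ≤ 1) ∨ ∑ j, dilRatio (l j) 4 * w j ≤ 1 ∨
      ((l 4 : ℝ)⁻¹ ≤ w 4 ∧
        ∑ j, ratioBound l 0 j * w j ≤ 1 + (ratioBound l 0 4 - ratioBound l 0 0) / l 4) ∨
      ((l 3 : ℝ)⁻¹ ≤ w 3 ∧
        ∑ j, ratioBound l 0 j * w j ≤ 1 + (ratioBound l 0 3 - ratioBound l 0 0) / l 3) := by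
  obtain ⟨p1, d1⟩ : l 1 % 2 = 0 ∧ dilRatio (l 1) 4 = 1 := by
    rcases h1 with h | h <;> norm_num [h, dilRatio]
  obtain ⟨p2, d2⟩ : l 2 % 2 = 0 ∧ dilRatio (l 2) 4 = 1 := by
    rcases h2 with h | h <;> norm_num [h, dilRatio]
  have := hw0 0; have := hw0 1; have := hw0 2; have := hw0 3; have := hw0 4
  by_contra! h
  obtain ⟨hA, hC, hD, hE⟩ := h
  have hA0 := hA 0; have hA1 := hA 1; have hA2 := hA 2; have hA3 := hA 3; have hA4 := hA 4
  obtain hD | hD := (le_or_gt ((l 4 : ℝ)⁻¹) (w 4)).imp hD id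
  all_goals obtain hE | hE := (le_or_gt ((l 3 : ℝ)⁻¹) (w 3)).imp hE id
  all_goals
    simp only [Fin.sum_univ_five, ratioBound, h0, h3, p1, p2, d1, d2, Fin.isValue, Fin.reduceEq,
      if_true, if_false] at hw1 hA0 hA1 hA2 hA3 hA4 hC hD hE
    rcases h4 with h4 | h4 | h4 | h4 <;> norm_num [h4, dilRatio] at hA0 hA1 hA2 hA3 hA4 hC hD hE <;>
      linarith

theorem caseC_lengths_le {l : Fin 5 → ℕ} (h1 : l 1 = 4 ∨ l 1 = 8) (h2 : l 2 = 4 ∨ l 2 = 8)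
    (h3 : l 3 = 11) (h4 : l 4 = 7 ∨ l 4 = 11 ∨ l 4 = 14 ∨ l 4 = 17) :
    ∀ j ≠ 0, 4 ≤ l j ∧ l j ≤ 11 * (l j % 3) ∧ l j ≤ l 4 * (l j % 3) := by
  intro j hj
  fin_cases j
  · exact absurd rfl hj
  all_goals
    rcases h1 with h1 | h1 <;> rcases h2 with h2 | h2 <;>
      rcases h4 with h4 | h4 | h4 | h4 <;> simp [h1, h2, h3, h4]

theorem dim4_caseC_general
    (u : Fin 5 → Fin 4 → ℤ)
    (hlen : ∀ i j, i ≠ j → 3 ≤ latLen u i j)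
    (h5 : ∀ i j, i ≠ j → latLen u i j ≠ 5)
    (h01 : latLen u 0 1 = 4 ∨ latLen u 0 1 = 8)
    (h02 : latLen u 0 2 = 4 ∨ latLen u 0 2 = 8)
    (h03 : latLen u 0 3 = 11)
    (h04 : latLen u 0 4 = 7 ∨ latLen u 0 4 = 11 ∨ latLen u 0 4 = 14 ∨ latLen u 0 4 = 17)
    (t t' : Fin 5 → ℕ)
    (ht : t = fun j => if j = 4 then 1 else 0)
    (ht' : t' = fun j => if j = 3 then 1 else 0) :
    lsimplex u = (⋃ i, dil u i 3) ∪ dil u 0 4 ∪ dilT u 0 3 t ∪ dilT u 0 3 t' := by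
  subst ht ht'
  have hl : ∀ i, ∀ j ≠ i, latLen u i j ≠ 0 := fun i j hj => by have := hlen i j hj.symm; omega
  have hr3 : ∀ i, ∀ j ≠ i, rmod u i j 3 < latLen u i j := fun i j hj =>
    rmod_lt_latLen three_pos (hlen i j hj.symm)
  have hl₀ := caseC_lengths_le h01 h02 h03 h04
  have hr4 : ∀ j ≠ 0, rmod u 0 j 4 < latLen u 0 j := fun j hj =>
    rmod_lt_latLen four_pos (hl₀ j hj).1
  refine subset_antisymm (fun x hx => ?_) ?_
  · obtain ⟨w, hw0, hw1, rfl⟩ := mem_convexHull_range_iff.1 hx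
    have hb := dilRatio_le_ratioBound hlen h5 0
    rcases caseC_weights_cover (latLen_self u 0) h01 h02 h03 h04 hw0 hw1 with
      ⟨i, h⟩ | h | ⟨hw4, h⟩ | ⟨hw3, h⟩
    · exact .inl (.inl (.inl (Set.mem_iUnion.2 ⟨i, sum_smul_mem_dil (hr3 i) hw0 hw1 (hb i) h⟩)))
    · exact .inl (.inl (.inr (sum_smul_mem_dil hr4 hw0 hw1 (fun _ => le_rfl) h)))
    · exact .inl (.inr (sum_smul_mem_dilT_single (by decide) (hr3 0) hw0 hw1 hw4 (hb 0) h))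
    · exact .inr (sum_smul_mem_dilT_single (by decide) (hr3 0) hw0 hw1 hw3 (hb 0) h)
  · refine Set.union_subset (Set.union_subset (Set.union_subset
      (Set.iUnion_subset fun i => dil_subset_lsimplex (hl i)) (dil_subset_lsimplex (hl 0)))
      (dilT_single_subset_lsimplex (by decide) (hl 0) fun j hj => (hl₀ j hj).2.2))
      (dilT_single_subset_lsimplex (by decide) (hl 0) fun j hj => ?_)
    rw [h03]
    exact (hl₀ j hj).2.1

/-- Case C: in dimension 4, with `l(P) ≥ 3`, no edge of length 5,
`l_{01}, l_{02} ∈ {4,8}`, `l_{03} = 11`, `l_{04} ∈ {7,11,14,17}`, and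
`t = (0,0,0,1)`, `t′ = (0,0,1,0)`, one has
`P = (⋃_{i=0}^4 P_{i,3}) ∪ P_{0,4} ∪ P_{0,3,t} ∪ P_{0,3,t′}`. -/
theorem dim4_caseC
    (u : Fin 5 → Fin 4 → ℤ)
    (hind : AffineIndependent ℝ fun i => toR (u i))
    (hlen : ∀ i j, i ≠ j → 3 ≤ latLen u i j)
    (h5 : ∀ i j, i ≠ j → latLen u i j ≠ 5)
    (h01 : latLen u 0 1 = 4 ∨ latLen u 0 1 = 8)
    (h02 : latLen u 0 2 = 4 ∨ latLen u 0 2 = 8)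
    (h03 : latLen u 0 3 = 11)
    (h04 : latLen u 0 4 = 7 ∨ latLen u 0 4 = 11 ∨ latLen u 0 4 = 14 ∨ latLen u 0 4 = 17)
    (t t' : Fin 5 → ℕ)
    (ht : t = fun j => if j = 4 then 1 else 0)
    (ht' : t' = fun j => if j = 3 then 1 else 0) :
    lsimplex u = (⋃ i, dil u i 3) ∪ dil u 0 4 ∪ dilT u 0 3 t ∪ dilT u 0 3 t' :=
  dim4_caseC_general u hlen h5 h01 h02 h03 h04 t t' ht ht'
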